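/- Let Δ be a d-dimensional orientable pseudomanifold with nonempty boundary and s facets. Then the symmetric homology polytope P_Δ is unimodularly equivalent to the standard s-dimensional crosspolytope conv{±e_1,...,±e_s}. -/

import Mathlib

open Matrix BigOperators Pointwise

/-- An abstract simplicial complex on vertex set `Fin n`. -/
structure SC (n : ℕ) where
  faces : Finset (Finset (Fin n))
  down_closed : ∀ σ ∈ faces, ∀ τ, τ ⊆ σ → τ.Nonempty → τ ∈ faces
  face_nonempty : ∀ σ ∈ faces, σ.Nonempty

namespace SC

variable {n : ℕ}

/-- `K` is `d`-dimensional. -/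
def dimIs (K : SC n) (d : ℕ) : Prop :=
  (∀ σ ∈ K.faces, σ.card ≤ d + 1) ∧ ∃ σ ∈ K.faces, σ.card = d + 1

/-- `K` is pure of dimension `d`. -/
def pure (K : SC n) (d : ℕ) : Prop :=
  ∀ σ ∈ K.faces, ∃ τ ∈ K.faces, σ ⊆ τ ∧ τ.card = d + 1

/-- The `j`-dimensional faces of `K`. -/
abbrev fdex (K : SC n) (j : ℕ) : Type := {σ : Finset (Fin n) // σ ∈ K.faces ∧ σ.card = j + 1}

end SC

/-- Entry of the simplicial boundary matrix: for a codimension-one subface `τ ⊆ σ`,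
the sign `(-1)^k` where `k` is the position of the vertex removed from `σ`. -/
def bEntry {n : ℕ} (τ σ : Finset (Fin n)) : ℤ :=
  if τ ⊆ σ ∧ σ.card = τ.card + 1 then
    ∑ v ∈ σ \ τ, (-1 : ℤ) ^ ((σ.filter fun w => w < v).card)
  else 0

/-- The boundary matrix from `(j+1)`-dimensional faces to `j`-dimensional faces,
i.e. the boundary map `∂_{j+2}`… no: `K.B j` is the map `∂` whose columns are indexed
by the `(j+1)`-faces; in homological notation `K.B (d-1)` is `∂_d`. -/
def SC.B {n : ℕ} (K : SC n) (j : ℕ) : Matrix (K.fdex j) (K.fdex (j + 1)) ℤ :=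
  fun τ σ => bEntry τ.1 σ.1

/-- Strong connectivity of a `(j+1)`-dimensional pure complex: any two facets are
connected by a chain of facets successively sharing a ridge. -/
def SC.StronglyConnected {n : ℕ} (K : SC n) (j : ℕ) : Prop :=
  ∀ a b : K.fdex (j + 1),
    Relation.ReflTransGen (fun σ σ' : K.fdex (j + 1) => (σ.1 ∩ σ'.1).card = j + 1) a b

/-- the number of facets (of a `(j+1)`-dimensional complex) containing a given ridge -/
def SC.ridgeDeg {n : ℕ} (K : SC n) (j : ℕ) (τ : K.fdex j) : ℕ :=
  (Finset.univ.filter fun σ : K.fdex (j + 1) => τ.1 ⊆ σ.1).card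

section Poly

variable {ι κ : Type*} [Fintype ι] [Fintype κ]

def dot (x y : ι → ℝ) : ℝ := ∑ i, x i * y i

/-- the columns of `A` and their negatives, as real vectors -/
def colsPM (A : Matrix ι κ ℤ) : Set (ι → ℝ) :=
  {x | ∃ j : κ, x = (fun i => (A i j : ℝ)) ∨ x = fun i => -(A i j : ℝ)}

/-- the centrally symmetric polytope `conv [A | -A]` -/
def symPoly (A : Matrix ι κ ℤ) : Set (ι → ℝ) := convexHull ℝ (colsPM A)

def intVec (x : ι → ℝ) : Prop := ∀ i, ∃ z : ℤ, x i = (z : ℝ)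

def latticePts (P : Set (ι → ℝ)) : Set (ι → ℝ) := {x ∈ P | intVec x}

/-- a set is a lattice polytope iff it is the convex hull of its lattice points -/
def IsLatticePolytope (Q : Set (ι → ℝ)) : Prop := Q = convexHull ℝ (latticePts Q)

/-- the polar dual, taken within the linear span of `P` -/
def polarIn (P : Set (ι → ℝ)) : Set (ι → ℝ) :=
  {y | y ∈ Submodule.span ℝ P ∧ ∀ x ∈ P, dot x y ≤ 1}

/-- `P` is reflexive: its polar dual (within the affine hull of `P`) is a lattice polytope -/
def IsReflexive (P : Set (ι → ℝ)) : Prop := IsLatticePolytope (polarIn P)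

/-- every lattice point of the span of `P` is an integer combination of lattice points of `P` -/
def IsSpanning (P : Set (ι → ℝ)) : Prop :=
  ∀ x : ι → ℝ, intVec x → x ∈ Submodule.span ℝ P →
    x ∈ (Submodule.span ℤ (latticePts P) : Set (ι → ℝ))

/-- the integer decomposition property -/
def IsIDP (P : Set (ι → ℝ)) : Prop :=
  ∀ k : ℕ, ∀ x : ι → ℝ, intVec x → x ∈ (k : ℝ) • P →
    ∃ f : Fin k → (ι → ℝ), (∀ i, f i ∈ latticePts P) ∧ x = ∑ i, f i

/-- combinatorial equivalence: an inclusion-order isomorphism between the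
posets of exposed faces -/
def CombEquiv (P : Set (ι → ℝ)) (Q : Set (κ → ℝ)) : Prop :=
  Nonempty ({F : Set (ι → ℝ) // IsExposed ℝ P F} ≃o {F : Set (κ → ℝ) // IsExposed ℝ Q F})

/-- unimodular equivalence: an affine isomorphism between the affine hulls which
matches up the two polytopes and the lattice points of the affine hulls -/
def UniEquiv (P : Set (ι → ℝ)) (Q : Set (κ → ℝ)) : Prop :=
  ∃ f : (ι → ℝ) →ᵃ[ℝ] (κ → ℝ),
    Set.BijOn f (affineSpan ℝ P : Set (ι → ℝ)) (affineSpan ℝ Q : Set (κ → ℝ)) ∧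
    f '' P = Q ∧
    (∀ x ∈ (affineSpan ℝ P : Set (ι → ℝ)), intVec x → intVec (f x)) ∧
    (∀ y ∈ (affineSpan ℝ Q : Set (κ → ℝ)), intVec y →
      ∃ x ∈ (affineSpan ℝ P : Set (ι → ℝ)), intVec x ∧ f x = y)

/-- the facets of a polytope: the maximal proper exposed faces -/
def polyFacets (P : Set (ι → ℝ)) : Set (Set (ι → ℝ)) :=
  {F | IsExposed ℝ P F ∧ F ⊂ P ∧ ∀ G, IsExposed ℝ P G → F ⊆ G → G ⊂ P → G = F}

/-- independence of a set of columns of a rational matrix -/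
def colsIndep (A : Matrix ι κ ℚ) (S : Set κ) : Prop :=
  LinearIndependent ℚ (fun j : S => (fun i => A i (j : κ)))

/-- `S` is a basis of the column matroid `M[A]` -/
def IsBasisSet (A : Matrix ι κ ℚ) (S : Set κ) : Prop :=
  colsIndep A S ∧ ∀ S' : Set κ, S ⊆ S' → colsIndep A S' → S' = S

end Poly

/-- the standard cross-polytope -/
def stdCross (s : ℕ) : Set (Fin s → ℝ) :=
  convexHull ℝ {x | ∃ i : Fin s, x = Pi.single i 1 ∨ x = Pi.single i (-1)}

/-- a signed incidence matrix of the cycle on `n` vertices: column `j` is `e_{j+1} - e_j` -/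
def cycMat (n : ℕ) : Matrix (Fin n) (Fin n) ℤ :=
  fun i j => (if (i : ℕ) = ((j : ℕ) + 1) % n then 1 else 0) - (if i = j then 1 else 0)

/-- a signed incidence matrix of the facet-ridge graph of a `(j+1)`-dimensional
pseudomanifold without boundary: rows are facets, columns are ridges, and the two
facets containing a ridge receive opposite signs. -/
noncomputable def SC.frg {n : ℕ} (K : SC n) (j : ℕ) :
    Matrix (K.fdex (j + 1)) (K.fdex j) ℤ :=
  fun σ τ =>
    if τ.1 ⊆ σ.1 then
      (if ∀ σ' : K.fdex (j + 1), τ.1 ⊆ σ'.1 → σ' ≠ σ →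
          (σ'.1 \ τ.1).min ≤ (σ.1 \ τ.1).min then 1 else -1)
    else 0

/-! The boundary ridge `τ₀` lies in a single facet `σ₀`. Every other facet `σ` shares a ridge
with a neighbour strictly closer to `σ₀` in the facet-ridge graph, and as ridges lie in at most
two facets, no other facet contains that ridge. Ordering the facets by their distance to `σ₀`,
the rows of `∂_d` at the chosen ridges form a triangular matrix with diagonal entries `±1`, so
`∂_d` has an integer left inverse `W`. Then `W` maps the column span of `∂_d` onto `ℝ^s`,
bijectively on lattice points, and sends the columns to the unit vectors, hence `P_Δ` onto the
crosspolytope. -/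

namespace SimpleGraph

variable {V : Type*} {G : SimpleGraph V} {u v : V}

lemma Reachable.exists_adj_dist_lt (h : G.Reachable u v) (hne : u ≠ v) :
    ∃ w, G.Adj w v ∧ G.dist u w < G.dist u v := by
  obtain ⟨p, hp⟩ := h.symm.exists_walk_length_eq_dist
  cases p with
  | nil => exact absurd rfl hne
  | cons hadj q =>
    refine ⟨_, hadj.symm, ?_⟩
    rw [dist_comm, dist_comm (u := u), ← hp, Walk.length_cons]
    exact (dist_le q).trans_lt (Nat.lt_succ_self _)

end SimpleGraph

namespace SC

variable {n j : ℕ} (K : SC n)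

def facetGraph (j : ℕ) : SimpleGraph (K.fdex (j + 1)) where
  Adj σ σ' := (σ.1 ∩ σ'.1).card = j + 1
  symm := ⟨fun σ σ' h => by rwa [Finset.inter_comm]⟩
  loopless := ⟨fun σ h => by simp [Finset.inter_self, σ.2.2] at h⟩

variable {K}

lemma StronglyConnected.preconnected (h : K.StronglyConnected j) :
    (K.facetGraph j).Preconnected :=
  fun a b => (SimpleGraph.reachable_iff_reflTransGen a b).2 (h a b)

def commonRidge {σ σ' : K.fdex (j + 1)} (h : (K.facetGraph j).Adj σ σ') : K.fdex j :=
  ⟨σ.1 ∩ σ'.1,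
    K.down_closed σ.1 σ.2.1 _ Finset.inter_subset_left (Finset.card_pos.1 (by
      change (σ.1 ∩ σ'.1).card = j + 1 at h
      omega)),
    h⟩

lemma eq_or_eq_of_ridgeDeg_le_two {τ : K.fdex j} (hτ : K.ridgeDeg j τ ≤ 2)
    {σ₁ σ₂ σ : K.fdex (j + 1)} (hne : σ₁ ≠ σ₂) (h₁ : τ.1 ⊆ σ₁.1) (h₂ : τ.1 ⊆ σ₂.1)
    (h : τ.1 ⊆ σ.1) : σ = σ₁ ∨ σ = σ₂ := by
  by_contra! hσ
  refine (Finset.two_lt_card_iff.2 ⟨σ₁, σ₂, σ, ?_, ?_, ?_, hne, hσ.1.symm, hσ.2.symm⟩).not_ge hτ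
  all_goals simpa

lemma exists_eq_of_ridgeDeg_eq_one {τ : K.fdex j} (hτ : K.ridgeDeg j τ = 1) :
    ∃ σ : K.fdex (j + 1), ∀ σ', τ.1 ⊆ σ'.1 ↔ σ' = σ := by
  obtain ⟨σ, hσ⟩ := Finset.card_eq_one.1 hτ
  exact ⟨σ, fun σ' => by simpa using Finset.ext_iff.1 hσ σ'⟩

lemma exists_ridge_peeling (hsc : K.StronglyConnected j)
    (hle : ∀ τ : K.fdex j, K.ridgeDeg j τ ≤ 2) (hbd : ∃ τ : K.fdex j, K.ridgeDeg j τ = 1) :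
    ∃ (ρ : K.fdex (j + 1) → K.fdex j) (d : K.fdex (j + 1) → ℕ), ∀ σ,
      (ρ σ).1 ⊆ σ.1 ∧ ∀ σ', (ρ σ).1 ⊆ σ'.1 → σ' = σ ∨ d σ' < d σ := by
  obtain ⟨τ₀, hτ₀⟩ := hbd
  obtain ⟨σ₀, hσ₀⟩ := exists_eq_of_ridgeDeg_eq_one hτ₀
  suffices ∀ σ, ∃ τ : K.fdex j, τ.1 ⊆ σ.1 ∧
      ∀ σ', τ.1 ⊆ σ'.1 → σ' = σ ∨ (K.facetGraph j).dist σ₀ σ' < (K.facetGraph j).dist σ₀ σ by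
    choose ρ hρ using this
    exact ⟨ρ, _, hρ⟩
  intro σ
  by_cases hσ : σ = σ₀
  · subst hσ
    exact ⟨τ₀, (hσ₀ σ).2 rfl, fun σ' h => Or.inl ((hσ₀ σ').1 h)⟩
  obtain ⟨p, hadj, hlt⟩ := (hsc.preconnected σ₀ σ).exists_adj_dist_lt (Ne.symm hσ)
  refine ⟨commonRidge hadj, Finset.inter_subset_right, fun σ' h => ?_⟩
  rcases eq_or_eq_of_ridgeDeg_le_two (hle _) hadj.ne Finset.inter_subset_left
    Finset.inter_subset_right h with rfl | rfl
  · exact Or.inr hlt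
  · exact Or.inl rfl

end SC

lemma bEntry_eq_zero_of_not_subset {n : ℕ} {τ σ : Finset (Fin n)} (h : ¬τ ⊆ σ) :
    bEntry τ σ = 0 :=
  if_neg fun h' => h h'.1

lemma isUnit_bEntry {n : ℕ} {τ σ : Finset (Fin n)} (h : τ ⊆ σ) (hcard : σ.card = τ.card + 1) :
    IsUnit (bEntry τ σ) := by
  obtain ⟨v, hv⟩ := Finset.card_eq_one.1
    (by rw [Finset.card_sdiff_of_subset h, hcard, Nat.add_sub_cancel_left] : (σ \ τ).card = 1)
  rw [bEntry, if_pos ⟨h, hcard⟩, hv, Finset.sum_singleton]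
  exact isUnit_one.neg.pow _

namespace Matrix

variable {ι κ R : Type*} [Fintype ι] [Fintype κ] [DecidableEq ι] [DecidableEq κ] [CommRing R]

lemma isUnit_det_of_triangular_of_isUnit_diag (M : Matrix κ κ R) (d : κ → ℕ)
    (hdiag : ∀ k, IsUnit (M k k))
    (hzero : ∀ k k', k ≠ k' → d k ≤ d k' → M k k' = 0) : IsUnit M.det := by
  let e := Fintype.equivFin κ
  let _ : LinearOrder κ := LinearOrder.lift' (fun k => toLex (d k, e k))
    fun a b h => e.injective (congrArg Prod.snd (toLex.injective h))
  have hlower : M.IsLowerTriangular := fun k k' hlt =>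
    have hlt : k < k' := hlt
    hzero k k' hlt.ne (Prod.Lex.toLex_le_toLex'.1 hlt.le).1
  rw [det_of_isLowerTriangular M hlower]
  exact IsUnit.prod_univ_iff.2 hdiag

lemma exists_mul_eq_one_of_peeling (B : Matrix ι κ R) (ρ : κ → ι) (d : κ → ℕ)
    (hunit : ∀ k, IsUnit (B (ρ k) k)) (hzero : ∀ k k', k ≠ k' → d k ≤ d k' → B (ρ k) k' = 0) :
    ∃ W : Matrix κ ι R, W * B = 1 := by
  have hdet := isUnit_det_of_triangular_of_isUnit_diag (B.submatrix ρ id) d hunit hzero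
  refine ⟨(B.submatrix ρ id)⁻¹ * (1 : Matrix ι ι R).submatrix ρ id, ?_⟩
  have hsel : (1 : Matrix ι ι R).submatrix ρ id * B = B.submatrix ρ id := by
    simpa using one_submatrix_mul ρ (Equiv.refl ι) B
  rw [Matrix.mul_assoc, hsel, nonsing_inv_mul _ hdet]

end Matrix

lemma SC.exists_mul_B_eq_one {n j : ℕ} (K : SC n) (hsc : K.StronglyConnected j)
    (hle : ∀ τ : K.fdex j, K.ridgeDeg j τ ≤ 2) (hbd : ∃ τ : K.fdex j, K.ridgeDeg j τ = 1) :
    ∃ W : Matrix (K.fdex (j + 1)) (K.fdex j) ℤ, W * K.B j = 1 := by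
  obtain ⟨ρ, d, hρ⟩ := K.exists_ridge_peeling hsc hle hbd
  refine (K.B j).exists_mul_eq_one_of_peeling ρ d
    (fun σ => isUnit_bEntry (hρ σ).1 (by rw [σ.2.2, (ρ σ).2.2])) fun σ σ' hne hd => ?_
  refine bEntry_eq_zero_of_not_subset fun h => ?_
  rcases (hρ σ).2 σ' h with rfl | hlt
  exacts [hne rfl, hlt.not_ge hd]

section Polytope

variable {ι κ : Type*}

lemma intVec_mulVec [Fintype ι] (M : Matrix κ ι ℤ) {x : ι → ℝ} (hx : intVec x) :
    intVec (M.map (Int.cast : ℤ → ℝ) *ᵥ x) := by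
  choose z hz using hx
  exact fun k => ⟨(M *ᵥ z) k, by simp [mulVec, dotProduct, hz]⟩

lemma uniEquiv_of_leftInverse {P : Set (ι → ℝ)} {Q : Set (κ → ℝ)}
    (f : (ι → ℝ) →ₗ[ℝ] (κ → ℝ)) (g : (κ → ℝ) →ₗ[ℝ] (ι → ℝ)) (hfg : ∀ y, f (g y) = y)
    (hgQ : g '' Q = P) (hf : ∀ x, intVec x → intVec (f x)) (hg : ∀ y, intVec y → intVec (g y)) :
    UniEquiv P Q := by
  have hspan : (affineSpan ℝ P : Set (ι → ℝ)) = g '' affineSpan ℝ Q := by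
    rw [← hgQ, ← LinearMap.coe_toAffineMap, ← AffineSubspace.map_span, AffineSubspace.coe_map]
  unfold UniEquiv
  rw [hspan]
  refine ⟨f.toAffineMap, ⟨?_, ?_, ?_⟩, ?_, fun x _ => hf x, fun y hy hint => ?_⟩
  · rintro _ ⟨y, hy, rfl⟩
    simpa [hfg] using hy
  · rintro _ ⟨y, -, rfl⟩ _ ⟨y', -, rfl⟩ h
    simp only [LinearMap.coe_toAffineMap, hfg] at h
    rw [h]
  · exact fun y hy => ⟨g y, ⟨y, hy, rfl⟩, hfg y⟩
  · rw [← hgQ, LinearMap.coe_toAffineMap, Set.image_image]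
    simp [hfg]
  · exact ⟨g y, ⟨y, hy, rfl⟩, hg y hint, hfg y⟩

lemma image_stdCross {s : ℕ} (B : Matrix ι (Fin s) ℤ) :
    (B.map (Int.cast : ℤ → ℝ)).mulVecLin '' stdCross s = symPoly B := by
  rw [stdCross, LinearMap.image_convexHull, symPoly]
  congr 1
  ext x
  simp only [Set.mem_image, Set.mem_ofPred_eq, colsPM]
  constructor
  · rintro ⟨_, ⟨i, rfl | rfl⟩, rfl⟩
    exacts [⟨i, Or.inl (by ext; simp [mulVec_single])⟩, ⟨i, Or.inr (by ext; simp [mulVec_single])⟩]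
  · rintro ⟨i, rfl | rfl⟩
    exacts [⟨_, ⟨i, Or.inl rfl⟩, by ext; simp [mulVec_single]⟩,
      ⟨_, ⟨i, Or.inr rfl⟩, by ext; simp [mulVec_single]⟩]

lemma uniEquiv_symPoly_stdCross [Fintype ι] {s : ℕ} (B : Matrix ι (Fin s) ℤ)
    (W : Matrix (Fin s) ι ℤ) (hWB : W * B = 1) : UniEquiv (symPoly B) (stdCross s) := by
  have hWB' : W.map (Int.cast : ℤ → ℝ) * B.map (Int.cast : ℤ → ℝ) = 1 := by
    simpa [hWB] using (Matrix.map_mul (L := W) (M := B) (f := Int.castRingHom ℝ)).symm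
  exact uniEquiv_of_leftInverse (W.map Int.cast).mulVecLin (B.map Int.cast).mulVecLin
    (fun y => by simp [mulVec_mulVec, hWB'])
    (image_stdCross B) (fun _ => intVec_mulVec W) (fun _ => intVec_mulVec B)

lemma symPoly_submatrix_equiv {κ' : Type*} (B : Matrix ι κ ℤ) (e : κ' ≃ κ) :
    symPoly (B.submatrix id e) = symPoly B := by
  rw [symPoly, symPoly]
  congr 1
  ext x
  exact ⟨fun ⟨k, h⟩ => ⟨e k, h⟩, fun ⟨k, h⟩ => ⟨e.symm k, by simpa using h⟩⟩

end Polytope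

theorem stmt18_general (n j s : ℕ) (K : SC n)
    (hsc : K.StronglyConnected j)
    (hle : ∀ τ : K.fdex j, K.ridgeDeg j τ ≤ 2)
    (hbd : ∃ τ : K.fdex j, K.ridgeDeg j τ = 1)
    (hs : Fintype.card (K.fdex (j + 1)) = s) :
    UniEquiv (symPoly (K.B j)) (stdCross s) := by
  obtain ⟨W, hW⟩ := K.exists_mul_B_eq_one hsc hle hbd
  let e := Fintype.equivFinOfCardEq hs
  rw [← symPoly_submatrix_equiv (K.B j) e.symm]
  refine uniEquiv_symPoly_stdCross _ (W.submatrix e.symm id) ?_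
  rw [← submatrix_mul _ _ _ _ _ Function.bijective_id, hW, submatrix_one_equiv]

/-- Let `Δ` be a `d`-dimensional (`d = j+1 ≥ 1`) orientable
pseudomanifold with nonempty boundary and `s` facets; orientability means that the
kernel of the relative boundary map (the rows of `∂_d` indexed by interior ridges)
is infinite cyclic. Then `P_Δ` is unimodularly equivalent to the standard
`s`-dimensional crosspolytope. -/
theorem stmt18 (n j s : ℕ) (K : SC n) (hdim : K.dimIs (j + 1)) (hpure : K.pure (j + 1))
    (hsc : K.StronglyConnected j)
    (hle : ∀ τ : K.fdex j, K.ridgeDeg j τ ≤ 2)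
    (hbd : ∃ τ : K.fdex j, K.ridgeDeg j τ = 1)
    (horient : ∃ z : K.fdex (j + 1) → ℤ, z ≠ 0 ∧
      (∀ τ : {τ : K.fdex j // K.ridgeDeg j τ = 2},
        ∑ σ : K.fdex (j + 1), (K.B j) τ.1 σ * z σ = 0) ∧
      ∀ w : K.fdex (j + 1) → ℤ,
        (∀ τ : {τ : K.fdex j // K.ridgeDeg j τ = 2},
          ∑ σ : K.fdex (j + 1), (K.B j) τ.1 σ * w σ = 0) →
        ∃ c : ℤ, w = c • z)
    (hs : Fintype.card (K.fdex (j + 1)) = s) :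
    UniEquiv (symPoly (K.B j)) (stdCross s) :=
  stmt18_general n j s K hsc hle hbd hs
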